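/- Let Π_1, …, Π_p be subspaces of ℝ^{n+1} with d = dim Π_1 + ⋯ + dim Π_p, and Δ̃ the diagonal subspace of (ℝ^{n+1})^p. Then dim(Π_1 × ⋯ × Π_p ∩ Δ̃^⊥) ≤ d − d/p, i.e. the intersection of the product with the orthogonal complement of the diagonal has dimension at most d(p−1)/p. -/

import Mathlib

/-- The linear map extracting the `i`-th block `ℝ^{n+1}` from
`(ℝ^{n+1})^p ≅ ℝ^{p(n+1)}`. -/
noncomputable def blockProj (p n : ℕ) (i : Fin p) :
    EuclideanSpace ℝ (Fin p × Fin (n + 1)) →ₗ[ℝ] EuclideanSpace ℝ (Fin (n + 1)) where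
  toFun x := WithLp.toLp 2 (fun m => x (i, m))
  map_add' _ _ := rfl
  map_smul' _ _ := rfl

/-- The diagonal subspace `Δ̃ = {(x, …, x) : x ∈ ℝ^{n+1}}` of `(ℝ^{n+1})^p`. -/
def diagSub (p n : ℕ) : Submodule ℝ (EuclideanSpace ℝ (Fin p × Fin (n + 1))) where
  carrier := {x | ∀ i j : Fin p, ∀ m : Fin (n + 1), x (i, m) = x (j, m)}
  add_mem' := by
    intro a b ha hb i j m
    show a (i, m) + b (i, m) = a (j, m) + b (j, m)
    rw [ha i j m, hb i j m]
  zero_mem' := by intro i j m; rfl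
  smul_mem' := by
    intro c a ha i j m
    show c * a (i, m) = c * a (j, m)
    rw [ha i j m]

/-- For subspaces `Π₁, …, Π_p ⊆ ℝ^{n+1}` with
`d = Σ dim Πᵢ`, the intersection of `Π₁ × ⋯ × Π_p` with the orthogonal complement of
the diagonal `Δ̃` has dimension at most `d − d/p = d(p−1)/p`, i.e.
`p · dim(Π₁ × ⋯ × Π_p ∩ Δ̃ᗮ) ≤ (p−1) · d`. -/
theorem dim_product_inter_diag_orthogonal (p n : ℕ) (hp : p.Prime)
    (Pl : Fin p → Submodule ℝ (EuclideanSpace ℝ (Fin (n + 1)))) :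
    p * Module.finrank ℝ
        (((⨅ i : Fin p, (Pl i).comap (blockProj p n i)) ⊓ (diagSub p n)ᗮ :
          Submodule ℝ (EuclideanSpace ℝ (Fin p × Fin (n + 1))))) ≤
      (p - 1) * ∑ i, Module.finrank ℝ (Pl i) := by
  classical
  set W : Submodule ℝ (EuclideanSpace ℝ (Fin p × Fin (n + 1))) :=
    ⨅ i : Fin p, (Pl i).comap (blockProj p n i) with hWdef
  set S : Submodule ℝ (EuclideanSpace ℝ (Fin p × Fin (n + 1))) :=
    W ⊓ (diagSub p n)ᗮ with hSdef
  let g : EuclideanSpace ℝ (Fin p × Fin (n + 1)) →ₗ[ℝ] EuclideanSpace ℝ (Fin (n + 1)) :=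
    ∑ i : Fin p, blockProj p n i
  have hg : ∀ x m, g x m = ∑ j : Fin p, x (j, m) := by
    intro x m
    show (∑ i : Fin p, blockProj p n i) x m = _
    rw [LinearMap.sum_apply]
    simp only [blockProj, LinearMap.coe_mk, AddHom.coe_mk]
    rw [WithLp.ofLp_sum]
    exact Finset.sum_apply m Finset.univ _
  -- S ≤ ker g
  have hSker : S ≤ LinearMap.ker g := by
    intro x hx
    have hx' := hx.2
    rw [LinearMap.mem_ker]
    ext m
    have hy : WithLp.toLp 2 (fun jm : Fin p × Fin (n + 1) => if jm.2 = m then (1 : ℝ) else 0)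
        ∈ diagSub p n := fun i j m' => rfl
    have h0 := hx' _ hy
    have : (0 : ℝ) = ∑ j : Fin p, x (j, m) := by
      rw [← h0]
      rw [PiLp.inner_apply]
      simp only [RCLike.inner_apply, conj_trivial]
      rw [Fintype.sum_prod_type]
      simp [Finset.sum_ite_eq']
    rw [hg x m, ← this]
    rfl
  -- each Pl i is contained in the image of W under g
  have hPlmap : ∀ i : Fin p, Pl i ≤ W.map g := by
    intro i v hv
    have hxW : (WithLp.toLp 2 (fun jm : Fin p × Fin (n + 1) => if jm.1 = i then v jm.2 else 0) :
        EuclideanSpace ℝ (Fin p × Fin (n + 1))) ∈ W := by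
      refine (Submodule.mem_iInf _).mpr fun j => ?_
      rw [Submodule.mem_comap]
      by_cases hj : j = i
      · subst hj
        have h : blockProj p n j (WithLp.toLp 2 (fun jm : Fin p × Fin (n + 1) => if jm.1 = j then v jm.2 else 0)) = v := by
          ext m; show (if j = j then v m else 0) = v m; simp
        exact h.symm ▸ hv
      · have h : blockProj p n j (WithLp.toLp 2 (fun jm : Fin p × Fin (n + 1) => if jm.1 = i then v jm.2 else 0)) = 0 := by
          ext m; show (if j = i then v m else 0) = 0; simp [hj]
        exact h.symm ▸ (Pl j).zero_mem
    refine ⟨_, hxW, ?_⟩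
    · ext m
      rw [hg]
      simp [Finset.sum_ite_eq']
  -- key per-i inequality
  have key : ∀ i : Fin p,
      Module.finrank ℝ S + Module.finrank ℝ (Pl i) ≤ Module.finrank ℝ W := by
    intro i
    have hrn := (g.domRestrict W).finrank_range_add_finrank_ker
    have h1 : Module.finrank ℝ S ≤ Module.finrank ℝ (LinearMap.ker (g.domRestrict W)) := by
      have hle : S.comap W.subtype ≤ LinearMap.ker (g.domRestrict W) := by
        intro x hx
        rw [LinearMap.mem_ker, LinearMap.domRestrict_apply]
        exact hSker hx
      calc Module.finrank ℝ S
          = Module.finrank ℝ (S.comap W.subtype) :=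
            (Submodule.comapSubtypeEquivOfLe inf_le_left).finrank_eq.symm
        _ ≤ _ := Submodule.finrank_mono hle
    have h2 : Module.finrank ℝ (Pl i) ≤
        Module.finrank ℝ (LinearMap.range (g.domRestrict W)) := by
      rw [LinearMap.range_domRestrict]
      exact Submodule.finrank_mono (hPlmap i)
    omega
  -- finrank W ≤ ∑ finrank (Pl i)
  have hWle : Module.finrank ℝ W ≤ ∑ i, Module.finrank ℝ (Pl i) := by
    let ψ : W →ₗ[ℝ] (∀ i : Fin p, (Pl i)) :=
      LinearMap.pi fun i =>
        LinearMap.codRestrict (Pl i) ((blockProj p n i).domRestrict W) (fun x =>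
          (Submodule.mem_iInf _).mp x.2 i)
    have hinj : Function.Injective ψ := by
      rw [← LinearMap.ker_eq_bot]
      rw [Submodule.eq_bot_iff]
      intro x hx
      rw [LinearMap.mem_ker] at hx
      ext jm
      have := congrArg (fun w : EuclideanSpace ℝ (Fin (n + 1)) => w jm.2) (congrArg Subtype.val (congrFun hx jm.1))
      exact this
    have := LinearMap.finrank_le_finrank_of_injective hinj
    rwa [Module.finrank_pi_fintype] at this
  have hsum : p * Module.finrank ℝ S + ∑ i, Module.finrank ℝ (Pl i)
      ≤ p * Module.finrank ℝ W := by
    have := Finset.sum_le_sum (fun i (_ : i ∈ Finset.univ) => key i)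
    simpa [Finset.sum_add_distrib, Finset.mul_sum, mul_comm] using this
  have hp1 : 1 ≤ p := hp.one_lt.le
  have hmul : p * Module.finrank ℝ W ≤ p * ∑ i, Module.finrank ℝ (Pl i) :=
    Nat.mul_le_mul_left _ hWle
  have hfin : (p - 1) * ∑ i, Module.finrank ℝ (Pl i)
      = p * ∑ i, Module.finrank ℝ (Pl i) - ∑ i, Module.finrank ℝ (Pl i) :=
    Nat.sub_one_mul _ _
  have hle' : ∑ i, Module.finrank ℝ (Pl i) ≤ p * ∑ i, Module.finrank ℝ (Pl i) :=
    Nat.le_mul_of_pos_left _ hp.pos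
  omega
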